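/- arXiv:2110.02032 — 2 statements merged into one kernel-verified Lean document; each statement's English description precedes it below -/
import Mathlib

section
/- Let A¹_k = N · M where N = sin²θ / (1 − cos²θ cos²(k−α)) and M is the 4×4 matrix with M₀₀ = 1/N, first row and column otherwise zero, and lower-right 3×3 block [[sin²(k−β), −cos(k−β)sin(k−β), cotθ sin(k−β)sin(k−α)], [−cos(k−β)sin(k−β), cos²(k−β), −cotθ cos(k−β)sin(k−α)], [cotθ sin(k−β)sin(k−α), −cotθ cos(k−β)sin(k−α), cot²θ sin²(k−α)]]. Then A¹_k is a projection: (A¹_k)² = A¹_k. -/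
/-!
Writing `e₀ = (1, 0, 0, 0)` and `v = (0, sin(k−β), −cos(k−β), cot θ · sin(k−α))`, we have
`A¹_k = e₀e₀ᵀ + N · vvᵀ`. Here `e₀ ⊥ v`, and `N |v|² = 1` because
`sin²θ + cos²θ sin²(k−α) = 1 − cos²θ cos²(k−α)`; so `A¹_k` is the sum of two mutually orthogonal
rank-one projections.
-/

open Complex Matrix

/-- The matrix A¹_k = N·M of Eq. (22): the Pauli-basis projector onto the
fixed subspace of the walk superoperator. -/
noncomputable def A1 (k θ α β : ℝ) : Matrix (Fin 4) (Fin 4) ℝ :=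
  let N : ℝ := Real.sin θ ^ 2 / (1 - Real.cos θ ^ 2 * Real.cos (k - α) ^ 2)
  let ct : ℝ := Real.cos θ / Real.sin θ
  N • !![1 / N, 0, 0, 0;
     0, Real.sin (k-β) ^ 2, -(Real.cos (k-β) * Real.sin (k-β)),
        ct * Real.sin (k-β) * Real.sin (k-α);
     0, -(Real.cos (k-β) * Real.sin (k-β)), Real.cos (k-β) ^ 2,
        -(ct * Real.cos (k-β) * Real.sin (k-α));
     0, ct * Real.sin (k-β) * Real.sin (k-α), -(ct * Real.cos (k-β) * Real.sin (k-α)),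
        ct ^ 2 * Real.sin (k-α) ^ 2]

section RankOneProjection

variable {n R : Type*} [Fintype n] [CommSemiring R]

theorem isIdempotentElem_smul_vecMulVec_self {c : R} {v : n → R} (hv : c * (v ⬝ᵥ v) = 1) :
    IsIdempotentElem (c • vecMulVec v v) := by
  rw [IsIdempotentElem, smul_mul_smul_comm, vecMulVec_mul_vecMulVec, vecMulVec_smul, smul_smul,
    mul_assoc, hv, mul_one]

theorem isIdempotentElem_vecMulVec_add_smul_vecMulVec {c : R} {u v : n → R}
    (hu : u ⬝ᵥ u = 1) (huv : u ⬝ᵥ v = 0) (hv : c * (v ⬝ᵥ v) = 1) :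
    IsIdempotentElem (vecMulVec u u + c • vecMulVec v v) := by
  have hu' : IsIdempotentElem ((1 : R) • vecMulVec u u) :=
    isIdempotentElem_smul_vecMulVec_self (by rw [one_mul, hu])
  rw [one_smul] at hu'
  refine hu'.add (isIdempotentElem_smul_vecMulVec_self hv) ?_
  simp [vecMulVec_mul_vecMulVec, huv, dotProduct_comm v u]

end RankOneProjection

noncomputable def A1Normalization (k θ α : ℝ) : ℝ :=
  Real.sin θ ^ 2 / (1 - Real.cos θ ^ 2 * Real.cos (k - α) ^ 2)

noncomputable def A1Vector (k θ α β : ℝ) : Fin 4 → ℝ :=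
  ![0, Real.sin (k - β), -Real.cos (k - β), Real.cos θ / Real.sin θ * Real.sin (k - α)]

theorem A1Normalization_ne_zero {k θ α : ℝ} (h1 : Real.sin θ ≠ 0)
    (h2 : Real.cos θ ^ 2 * Real.cos (k - α) ^ 2 ≠ 1) : A1Normalization k θ α ≠ 0 :=
  div_ne_zero (pow_ne_zero 2 h1) (sub_ne_zero.mpr h2.symm)

theorem A1_eq_vecMulVec_add_smul_vecMulVec {k θ α β : ℝ} (hN : A1Normalization k θ α ≠ 0) :
    A1 k θ α β = vecMulVec ![1, 0, 0, 0] ![1, 0, 0, 0] +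
      A1Normalization k θ α • vecMulVec (A1Vector k θ α β) (A1Vector k θ α β) := by
  rw [A1, ← A1Normalization]
  ext i j
  fin_cases i <;> fin_cases j <;> simp [A1Vector, hN] <;> ring

theorem A1Normalization_mul_dotProduct_A1Vector {k θ α β : ℝ} (h1 : Real.sin θ ≠ 0)
    (h2 : Real.cos θ ^ 2 * Real.cos (k - α) ^ 2 ≠ 1) :
    A1Normalization k θ α * (A1Vector k θ α β ⬝ᵥ A1Vector k θ α β) = 1 := by
  simp only [A1Normalization, A1Vector, dotProduct, Fin.sum_univ_four, cons_val_zero, cons_val_one,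
    cons_val, mul_zero, zero_add, neg_mul_neg]
  field_simp
  linear_combination Real.sin θ ^ 2 * Real.sin_sq_add_cos_sq (k - β) +
    Real.cos θ ^ 2 * Real.sin_sq_add_cos_sq (k - α) + Real.sin_sq_add_cos_sq θ

/-- A¹_k is a projection. -/
theorem A1_projection (k θ α β : ℝ) (h1 : Real.sin θ ≠ 0)
    (h2 : Real.cos θ ^ 2 * Real.cos (k - α) ^ 2 ≠ 1) :
    A1 k θ α β * A1 k θ α β = A1 k θ α β := by
  rw [A1_eq_vecMulVec_add_smul_vecMulVec (A1Normalization_ne_zero h1 h2)]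
  refine isIdempotentElem_vecMulVec_add_smul_vecMulVec ?_ ?_
    (A1Normalization_mul_dotProduct_A1Vector h1 h2) <;>
  simp [A1Vector, dotProduct, Fin.sum_univ_four]
end

section
/- For ρ'₀ with Pauli-coefficient vector (1, cos k, −sin k, 0)ᵀ (arising from the entangled initial state (|0⟩_p|0⟩_c + |1⟩_p|1⟩_c)/√2), both integrals (1/2π)∫_{−π}^{π} ⟨O_θ| A¹_k |ρ'₀⟩ dk and (1/2π)∫_{−π}^{π} ⟨O_α| A¹_k |ρ'₀⟩ dk vanish. Equivalently, ∫_{−π}^{π} [2 cos(k−α) sin(2k−β) sin²θ / (1 − cos²(k−α)cos²θ)] dk = 0 and ∫_{−π}^{π} [sin(k−α) sin(2k−β) sin2θ / (1 − cos²(k−α)cos²θ)] dk = 0, for θ with cos²θ < 1. -/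
open Complex Matrix Real

/-- The Pauli-coefficient vector of O_θ = u_k† ∂_θ u_k. -/
noncomputable def OθVec (α β : ℝ) : Fin 4 → ℂ :=
  ![0, 2 * Complex.I * (-Real.sin (α - β)), 2 * Complex.I * Real.cos (α - β), 0]

/-- The Pauli-coefficient vector of O_α = u_k† ∂_α u_k. -/
noncomputable def OαVec (θ α β : ℝ) : Fin 4 → ℂ :=
  ![0, Complex.I * (Real.cos (α - β) * Real.sin (2 * θ)),
     Complex.I * (Real.sin (α - β) * Real.sin (2 * θ)),
     Complex.I * (2 * Real.cos θ ^ 2)]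

/-- ⟨v|M|w⟩ = v† M w, with M the (complexified) matrix A¹_k. -/
noncomputable def braket (k θ α β : ℝ) (v w : Fin 4 → ℂ) : ℂ :=
  star v ⬝ᵥ ((A1 k θ α β).map (fun x : ℝ => (x : ℂ))).mulVec w

/-- The Pauli-coefficient vector of ρ'₀ arising from the entangled initial state
(|0⟩ₚ|0⟩_c + |1⟩ₚ|1⟩_c)/√2. -/
noncomputable def ρVec (k : ℝ) : Fin 4 → ℂ :=
  ![1, Real.cos k, -Real.sin k, 0]


lemma integral_antiperiodic_pi {E : Type*} [NormedAddCommGroup E] [NormedSpace ℝ E]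
    {f : ℝ → E} (hf : ∀ x, f (x + Real.pi) = -f x) :
    (∫ k in (-Real.pi)..Real.pi, f k) = 0 := by
  by_cases h : IntervalIntegrable f MeasureTheory.volume (-Real.pi) Real.pi
  · have hsub : ∀ a b : ℝ, a ∈ Set.uIcc (-Real.pi) Real.pi → b ∈ Set.uIcc (-Real.pi) Real.pi →
      IntervalIntegrable f MeasureTheory.volume a b := fun a b ha hb =>
        h.mono_set (Set.uIcc_subset_uIcc ha hb)
    have hmem0 : (0:ℝ) ∈ Set.uIcc (-Real.pi) Real.pi := by
      rw [Set.mem_uIcc]; left; constructor <;> [linarith [Real.pi_pos]; exact Real.pi_nonneg]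
    have h1 := hsub (-Real.pi) 0 Set.left_mem_uIcc hmem0
    have h2 := hsub 0 Real.pi hmem0 Set.right_mem_uIcc
    have key : ∀ k : ℝ, f (k + -Real.pi) = -f k := by
      intro k
      have h' := hf (k + -Real.pi)
      rw [show k + -Real.pi + Real.pi = k by ring] at h'
      rw [h', neg_neg]
    have hshift : (∫ k in (-Real.pi)..0, f k) = -∫ k in (0:ℝ)..Real.pi, f k := by
      have := intervalIntegral.integral_comp_add_right (a := (0:ℝ)) (b := Real.pi)
        (d := -Real.pi) f
      rw [zero_add, show Real.pi + -Real.pi = 0 by ring] at this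
      rw [← this, ← intervalIntegral.integral_neg]
      exact intervalIntegral.integral_congr fun k _ => key k
    have hsplit := intervalIntegral.integral_add_adjacent_intervals h1 h2
    rw [← hsplit, hshift, neg_add_cancel]
  · exact intervalIntegral.integral_undef h

set_option maxHeartbeats 1000000 in
lemma braket_theta_anti (θ α β x : ℝ) :
    braket (x + π) θ α β (OθVec α β) (ρVec (x + π)) =
      -braket x θ α β (OθVec α β) (ρVec x) := by
  simp [braket, A1, Matrix.mulVec, dotProduct, Fin.sum_univ_four, OθVec, ρVec,
    Matrix.vecHead, Matrix.vecTail]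
  rw [show (↑x + ↑π - ↑α : ℂ) = (↑x - ↑α) + ↑π by ring,
    show (↑x + ↑π - ↑β : ℂ) = (↑x - ↑β) + ↑π by ring]
  simp only [Complex.cos_add_pi, Complex.sin_add_pi]
  ring

set_option maxHeartbeats 1000000 in
lemma braket_alpha_anti (θ α β x : ℝ) :
    braket (x + π) θ α β (OαVec θ α β) (ρVec (x + π)) =
      -braket x θ α β (OαVec θ α β) (ρVec x) := by
  simp [braket, A1, Matrix.mulVec, dotProduct, Fin.sum_univ_four, OαVec, ρVec,
    Matrix.vecHead, Matrix.vecTail]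
  rw [show (↑x + ↑π - ↑α : ℂ) = (↑x - ↑α) + ↑π by ring,
    show (↑x + ↑π - ↑β : ℂ) = (↑x - ↑β) + ↑π by ring]
  simp only [Complex.cos_add_pi, Complex.sin_add_pi]
  ring

/-- For the entangled initial state, both initial-state-dependent integrals vanish;
equivalently, the two explicit trigonometric integrals vanish. -/
theorem entangled_initial_state_terms_vanish (θ α β : ℝ) (hθ : Real.cos θ ^ 2 < 1) :
    (1 / (2 * Real.pi) : ℂ) *
        (∫ k in (-Real.pi)..Real.pi, braket k θ α β (OθVec α β) (ρVec k)) = 0 ∧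
    (1 / (2 * Real.pi) : ℂ) *
        (∫ k in (-Real.pi)..Real.pi, braket k θ α β (OαVec θ α β) (ρVec k)) = 0 ∧
    (∫ k in (-Real.pi)..Real.pi,
        2 * Real.cos (k - α) * Real.sin (2 * k - β) * Real.sin θ ^ 2 /
          (1 - Real.cos (k - α) ^ 2 * Real.cos θ ^ 2)) = 0 ∧
    (∫ k in (-Real.pi)..Real.pi,
        Real.sin (k - α) * Real.sin (2 * k - β) * Real.sin (2 * θ) /
          (1 - Real.cos (k - α) ^ 2 * Real.cos θ ^ 2)) = 0 := by
  refine ⟨?_, ?_, ?_, ?_⟩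
  · rw [integral_antiperiodic_pi (f := fun k => braket k θ α β (OθVec α β) (ρVec k))
      (fun x => braket_theta_anti θ α β x), mul_zero]
  · rw [integral_antiperiodic_pi (f := fun k => braket k θ α β (OαVec θ α β) (ρVec k))
      (fun x => braket_alpha_anti θ α β x), mul_zero]
  · refine integral_antiperiodic_pi fun x => ?_
    rw [show x + π - α = (x - α) + π by ring, Real.cos_add_pi,
      show 2 * (x + π) - β = (2 * x - β) + 2 * π by ring, Real.sin_add_two_pi]
    ring
  · refine integral_antiperiodic_pi fun x => ?_
    rw [show x + π - α = (x - α) + π by ring, Real.cos_add_pi, Real.sin_add_pi,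
      show 2 * (x + π) - β = (2 * x - β) + 2 * π by ring, Real.sin_add_two_pi]
    ring
end
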